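/- arXiv:2001.07366 — 2 statements merged into one kernel-verified Lean document; each statement's English description precedes it below -/
import Mathlib

section
/- Correctness of forward-mode AD for products: let f, g : ℝ^N → ℝ be twice continuously differentiable at a point a ∈ ℝ^N, and let T_a(h) = (h(a), ∇h(a), Hess h(a)) ∈ D2(N) denote the second-order dual lift of a C² function h at a. Then T_a(f·g) = T_a(f) · T_a(g); in particular ∇(fg)(a) = g(a)∇f(a) + f(a)∇g(a) and Hess(fg)(a) = g(a)·Hess f(a) + ∇f(a)∇g(a)ᵀ + ∇g(a)∇f(a)ᵀ + f(a)·Hess g(a). -/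
/-- Second-order dual numbers of dimension `N`: a value, a gradient part, and a Hessian part. -/
abbrev D2 (N : ℕ) : Type := ℝ × (Fin N → ℝ) × Matrix (Fin N) (Fin N) ℝ

/-- Multiplication of second-order dual numbers. -/
noncomputable def D2.mul {N : ℕ} (x y : D2 N) : D2 N :=
  (x.1 * y.1,
   x.1 • y.2.1 + y.1 • x.2.1,
   y.1 • x.2.2 + x.1 • y.2.2 + Matrix.vecMulVec x.2.1 y.2.1 + Matrix.vecMulVec y.2.1 x.2.1)

/-- The gradient of a scalar function on `ℝ^N`. -/
noncomputable def grad {N : ℕ} (h : (Fin N → ℝ) → ℝ) (a : Fin N → ℝ) : Fin N → ℝ :=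
  fun i => fderiv ℝ h a (Pi.single i 1)

/-- The Hessian matrix of a scalar function on `ℝ^N`. -/
noncomputable def hess {N : ℕ} (h : (Fin N → ℝ) → ℝ) (a : Fin N → ℝ) :
    Matrix (Fin N) (Fin N) ℝ :=
  Matrix.of fun i j => fderiv ℝ (fun x => fderiv ℝ h x (Pi.single j 1)) a (Pi.single i 1)

/-- The second-order dual lift `T_a(h) = (h(a), ∇h(a), Hess h(a))`. -/
noncomputable def dualLift {N : ℕ} (h : (Fin N → ℝ) → ℝ) (a : Fin N → ℝ) : D2 N :=
  (h a, grad h a, hess h a)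

/-!
The Hessian entries are derivatives of directional derivatives. Since a `C²` function is
differentiable on a neighbourhood of `a`, the first-order Leibniz rule holds near `a`, and
differentiating it once more at `a` yields the second-order rule.
-/

open Filter Topology

section ProductRule

variable {𝕜 E : Type*} [NontriviallyNormedField 𝕜] [NormedAddCommGroup E] [NormedSpace 𝕜 E]
  {f g : E → 𝕜} {a : E}

theorem fderiv_fun_mul_apply (hf : DifferentiableAt 𝕜 f a) (hg : DifferentiableAt 𝕜 g a)
    (v : E) :
    fderiv 𝕜 (fun x => f x * g x) a v = f a * fderiv 𝕜 g a v + g a * fderiv 𝕜 f a v := by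
  simp [fderiv_fun_mul hf hg]

theorem ContDiffAt.differentiableAt_fderiv_apply (hf : ContDiffAt 𝕜 2 f a) (v : E) :
    DifferentiableAt 𝕜 (fun x => fderiv 𝕜 f x v) a :=
  ((hf.fderiv_right (m := 1) (by norm_num)).differentiableAt (by norm_num)).clm_apply
    (differentiableAt_const v)

theorem fderiv_fderiv_fun_mul_apply (hf : ContDiffAt 𝕜 2 f a) (hg : ContDiffAt 𝕜 2 g a)
    (u v : E) :
    fderiv 𝕜 (fun x => fderiv 𝕜 (fun y => f y * g y) x v) a u =
      f a * fderiv 𝕜 (fun x => fderiv 𝕜 g x v) a u + fderiv 𝕜 f a u * fderiv 𝕜 g a v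
        + fderiv 𝕜 g a u * fderiv 𝕜 f a v + g a * fderiv 𝕜 (fun x => fderiv 𝕜 f x v) a u := by
  have hf₁ : DifferentiableAt 𝕜 f a := hf.differentiableAt (by norm_num)
  have hg₁ : DifferentiableAt 𝕜 g a := hg.differentiableAt (by norm_num)
  have hf₂ := hf.differentiableAt_fderiv_apply v
  have hg₂ := hg.differentiableAt_fderiv_apply v
  have first_order : (fun x => fderiv 𝕜 (fun y => f y * g y) x v) =ᶠ[𝓝 a]
      fun x => f x * fderiv 𝕜 g x v + g x * fderiv 𝕜 f x v := by
    filter_upwards [hf.eventually (by norm_num), hg.eventually (by norm_num)] with x hfx hgx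
    exact fderiv_fun_mul_apply (hfx.differentiableAt (by norm_num))
      (hgx.differentiableAt (by norm_num)) v
  rw [first_order.fderiv_eq, fderiv_fun_add (hf₁.fun_mul hg₂) (hg₁.fun_mul hf₂),
    add_apply, fderiv_fun_mul_apply hf₁ hg₂, fderiv_fun_mul_apply hg₁ hf₂]
  ring

end ProductRule

section DualNumbers

variable {N : ℕ} {f g : (Fin N → ℝ) → ℝ} {a : Fin N → ℝ}

theorem grad_mul (hf : DifferentiableAt ℝ f a) (hg : DifferentiableAt ℝ g a) :
    grad (fun x => f x * g x) a = g a • grad f a + f a • grad g a := by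
  ext i
  simp only [grad, fderiv_fun_mul_apply hf hg, Pi.add_apply, Pi.smul_apply, smul_eq_mul]
  ring

theorem hess_mul (hf : ContDiffAt ℝ 2 f a) (hg : ContDiffAt ℝ 2 g a) :
    hess (fun x => f x * g x) a =
      g a • hess f a + Matrix.vecMulVec (grad f a) (grad g a)
        + Matrix.vecMulVec (grad g a) (grad f a) + f a • hess g a := by
  ext i j
  simp only [hess, grad, fderiv_fderiv_fun_mul_apply hf hg, Matrix.of_apply, Matrix.add_apply,
    Matrix.smul_apply, Matrix.vecMulVec_apply, smul_eq_mul]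
  ring

end DualNumbers

/-- Correctness of forward-mode AD for products: the dual lift of a product is the
dual-number product of the lifts; in particular the product rules for the gradient
and the Hessian hold. -/
theorem dualLift_mul {N : ℕ} (f g : (Fin N → ℝ) → ℝ) (a : Fin N → ℝ)
    (hf : ContDiffAt ℝ 2 f a) (hg : ContDiffAt ℝ 2 g a) :
    dualLift (fun x => f x * g x) a = D2.mul (dualLift f a) (dualLift g a) ∧
    grad (fun x => f x * g x) a = g a • grad f a + f a • grad g a ∧
    hess (fun x => f x * g x) a =
      g a • hess f a + Matrix.vecMulVec (grad f a) (grad g a)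
        + Matrix.vecMulVec (grad g a) (grad f a) + f a • hess g a := by
  have hgrad := grad_mul (hf.differentiableAt (by norm_num)) (hg.differentiableAt (by norm_num))
  have hhess := hess_mul hf hg
  refine ⟨Prod.ext rfl (Prod.ext ?_ ?_), hgrad, hhess⟩
  · simp only [dualLift, D2.mul, hgrad, add_comm]
  · simp only [dualLift, D2.mul, hhess]
    abel
end

section
/- Complex-step derivative error bound: let f : ℂ → ℂ be analytic on an open ball around a real point x, with f mapping real numbers in that ball to real numbers, and suppose ‖f'''(z)‖ ≤ M for all z on the segment from x to x + iΔx, where Δx > 0 is small enough that this segment lies in the ball. Then | Im(f(x + iΔx))/Δx − f'(x) | ≤ (M/6)·Δx², so the complex-step formula approximates the first derivative with a second-order error in the step size. -/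
/-!
Expand `f` in a Taylor series along the vertical segment from `x` to `x + iΔx`:
`f(x + iΔx) = f(x) + iΔx f'(x) - Δx² f''(x)/2 + R` with `|R| ≤ M Δx³/6`.
Since `f` is real on the real axis, so are all its derivatives at `x`; hence
`Im f(x + iΔx) = Δx f'(x) + Im R`, and dividing by `Δx` gives the bound.
-/

open Set Complex Filter Topology Nat

theorem AnalyticAt.iteratedDeriv {𝕜 F : Type*} [NontriviallyNormedField 𝕜]
    [NormedAddCommGroup F] [NormedSpace 𝕜 F] [CompleteSpace F] {f : 𝕜 → F} {z : 𝕜}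
    (hf : AnalyticAt 𝕜 f z) (n : ℕ) : AnalyticAt 𝕜 (_root_.iteratedDeriv n f) z :=
  iteratedDeriv_eq_iterate (f := f) ▸ hf.iterated_deriv n

theorem integral_sub_pow_div_factorial {a b : ℝ} (n : ℕ) :
    ∫ t in a..b, (b - t) ^ n / n ! = (b - a) ^ (n + 1) / (n + 1)! := by
  rw [intervalIntegral.integral_div, intervalIntegral.integral_comp_sub_left (fun t => t ^ n),
    integral_pow, sub_self, zero_pow n.succ_ne_zero, sub_zero, div_div, factorial_succ]
  push_cast
  ring

/-- Taylor's theorem with the sharp constant `1 / (n + 1)!`, obtained from the integral form of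
the remainder (`taylor_mean_remainder_bound` only gives `1 / n!`). -/
theorem norm_sub_taylorWithinEval_le {F : Type*} [NormedAddCommGroup F] [NormedSpace ℝ F]
    [CompleteSpace F] {f : ℝ → F} {a b C : ℝ} {n : ℕ} (hab : a ≤ b)
    (hf : ContDiffOn ℝ (n + 1) f (Icc a b))
    (hC : ∀ y ∈ Icc a b, ‖iteratedDerivWithin (n + 1) f (Icc a b) y‖ ≤ C) :
    ‖f b - taylorWithinEval f n (Icc a b) a b‖ ≤ C * (b - a) ^ (n + 1) / (n + 1)! := by
  rw [← uIcc_of_le hab] at hf hC ⊢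
  rw [taylor_integral_remainder hf]
  calc ‖∫ t in a..b, ((b - t) ^ n / n !) • iteratedDerivWithin (n + 1) f (uIcc a b) t‖
      ≤ ∫ t in a..b, C * ((b - t) ^ n / n !) := by
        refine intervalIntegral.norm_integral_le_of_norm_le hab
          (MeasureTheory.ae_of_all _ fun t ht => ?_)
          (Continuous.intervalIntegrable (by fun_prop) _ _)
        have ht' : t ∈ uIcc a b := uIcc_of_le hab ▸ Ioc_subset_Icc_self ht
        have hbt : 0 ≤ b - t := sub_nonneg.2 ht.2
        rw [norm_smul, Real.norm_of_nonneg (by positivity), mul_comm]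
        exact mul_le_mul_of_nonneg_right (hC t ht') (by positivity)
    _ = C * (b - a) ^ (n + 1) / (n + 1)! := by
        rw [intervalIntegral.integral_const_mul, integral_sub_pow_div_factorial, mul_div_assoc]

theorem hasDerivAt_line (z v : ℂ) (t : ℝ) : HasDerivAt (fun s : ℝ => z + s * v) v t := by
  simpa using ((hasDerivAt_id t).ofReal_comp.mul_const v).const_add z

theorem iteratedDeriv_comp_line {f : ℂ → ℂ} {z v : ℂ} {t : ℝ} (hf : AnalyticAt ℂ f (z + t * v))
    (n : ℕ) :
    iteratedDeriv n (fun s : ℝ => f (z + s * v)) t = v ^ n * iteratedDeriv n f (z + t * v) := by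
  induction n generalizing t with
  | zero => simp
  | succ n ih =>
    have hnear : (iteratedDeriv n fun s : ℝ => f (z + s * v)) =ᶠ[𝓝 t]
        fun s => v ^ n * iteratedDeriv n f (z + s * v) :=
      ((hasDerivAt_line z v t).continuousAt.eventually hf.eventually_analyticAt).mono
        fun s hs => ih hs
    have hD : HasDerivAt (fun s : ℝ => iteratedDeriv n f (z + s * v))
        (iteratedDeriv (n + 1) f (z + t * v) * v) t := by
      rw [iteratedDeriv_succ]
      exact (hf.iteratedDeriv n).differentiableAt.hasDerivAt.comp t (hasDerivAt_line z v t)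
    rw [iteratedDeriv_succ, hnear.deriv_eq, (hD.const_mul _).deriv]
    ring

theorem norm_sub_taylor_le_of_segment {f : ℂ → ℂ} {z v : ℂ} {M : ℝ} {n : ℕ}
    (hf : ∀ ζ ∈ segment ℝ z (z + v), AnalyticAt ℂ f ζ)
    (hM : ∀ ζ ∈ segment ℝ z (z + v), ‖iteratedDeriv (n + 1) f ζ‖ ≤ M) :
    ‖f (z + v) - ∑ k ∈ Finset.range (n + 1), iteratedDeriv k f z * v ^ k / (k ! : ℂ)‖ ≤
      M * ‖v‖ ^ (n + 1) / (n + 1)! := by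
  set g : ℝ → ℂ := fun s => f (z + s * v)
  have hseg : ∀ s ∈ Icc (0 : ℝ) 1, z + s * v ∈ segment ℝ z (z + v) := fun s hs => by
    rw [segment_eq_image']
    exact ⟨s, hs, by simp⟩
  have hAt : ∀ s ∈ Icc (0 : ℝ) 1, AnalyticAt ℂ f (z + s * v) := fun s hs => hf _ (hseg s hs)
  have hcd : ∀ s ∈ Icc (0 : ℝ) 1, ContDiffAt ℝ (n + 1) g s :=
    fun s hs => ((hAt s hs).contDiffAt.restrict_scalars ℝ).comp s
      (contDiff_const.add (ofRealCLM.contDiff.mul contDiff_const)).contDiffAt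
  have hderiv : ∀ k ≤ n + 1, ∀ s ∈ Icc (0 : ℝ) 1,
      iteratedDerivWithin k g (Icc 0 1) s = v ^ k * iteratedDeriv k f (z + s * v) :=
    fun k hk s hs => by
      rw [iteratedDerivWithin_eq_iteratedDeriv (uniqueDiffOn_Icc zero_lt_one)
        ((hcd s hs).of_le (by exact_mod_cast hk)) hs, iteratedDeriv_comp_line (hAt s hs)]
  have hrem := norm_sub_taylorWithinEval_le zero_le_one (fun s hs => (hcd s hs).contDiffWithinAt)
    (C := M * ‖v‖ ^ (n + 1)) fun s hs => by
      rw [hderiv _ le_rfl s hs, norm_mul, norm_pow, mul_comm]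
      exact mul_le_mul_of_nonneg_right (hM _ (hseg s hs)) (by positivity)
  have htaylor : taylorWithinEval g n (Icc 0 1) 0 1 =
      ∑ k ∈ Finset.range (n + 1), iteratedDeriv k f z * v ^ k / (k ! : ℂ) := by
    rw [taylor_within_apply]
    refine Finset.sum_congr rfl fun k hk => ?_
    rw [hderiv k (Finset.mem_range_succ_iff.1 hk |>.trans n.le_succ) 0 (left_mem_Icc.2 zero_le_one)]
    simp only [sub_zero, one_pow, mul_one, ofReal_zero, zero_mul, add_zero, real_smul, ofReal_inv,
      ofReal_natCast]
    ring
  simpa [g, htaylor] using hrem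

theorem im_deriv_eq_zero_of_eventually_im_eq_zero {g : ℂ → ℂ} {x : ℝ}
    (hg : DifferentiableAt ℂ g x) (hre : ∀ᶠ t : ℝ in 𝓝 x, (g t).im = 0) :
    (deriv g x).im = 0 := by
  have h : HasDerivAt (fun t : ℝ => (g t).im) (deriv g x).im x :=
    imCLM.hasFDerivAt.comp_hasDerivAt x hg.hasDerivAt.comp_ofReal
  exact h.unique ((hasDerivAt_const x 0).congr_of_eventuallyEq hre)

theorem eventually_im_iteratedDeriv_eq_zero {f : ℂ → ℂ} {x : ℝ} (hf : AnalyticAt ℂ f x)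
    (hre : ∀ᶠ t : ℝ in 𝓝 x, (f t).im = 0) (n : ℕ) :
    ∀ᶠ t : ℝ in 𝓝 x, (iteratedDeriv n f t).im = 0 := by
  induction n with
  | zero => simpa using hre
  | succ n ih =>
    have hnear : ∀ᶠ t : ℝ in 𝓝 x, AnalyticAt ℂ f t :=
      continuous_ofReal.continuousAt.eventually hf.eventually_analyticAt
    filter_upwards [hnear, ih.eventually_nhds] with t ht hih
    rw [iteratedDeriv_succ]
    exact im_deriv_eq_zero_of_eventually_im_eq_zero (ht.iteratedDeriv n).differentiableAt hih

theorem complex_step_derivative_error_general (f : ℂ → ℂ) (x Δx M r : ℝ) (hΔx : 0 < Δx)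
    (hf : AnalyticOnNhd ℂ f (Metric.ball (x : ℂ) r))
    (hreal : ∀ t : ℝ, (t : ℂ) ∈ Metric.ball (x : ℂ) r → (f t).im = 0)
    (hseg : segment ℝ (x : ℂ) ((x : ℂ) + Δx * Complex.I) ⊆ Metric.ball (x : ℂ) r)
    (hM : ∀ z ∈ segment ℝ (x : ℂ) ((x : ℂ) + Δx * Complex.I), ‖iteratedDeriv 3 f z‖ ≤ M) :
    ‖(((f ((x : ℂ) + Δx * Complex.I)).im / Δx : ℝ) : ℂ) - deriv f (x : ℂ)‖ ≤ M / 6 * Δx ^ 2 := by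
  have hx : (x : ℂ) ∈ Metric.ball (x : ℂ) r := hseg (left_mem_segment ℝ _ _)
  have hre : ∀ᶠ t : ℝ in 𝓝 x, (f t).im = 0 :=
    mem_of_superset ((Metric.isOpen_ball.preimage continuous_ofReal).mem_nhds hx) hreal
  have hreal_deriv (k : ℕ) : (iteratedDeriv k f x).im = 0 :=
    (eventually_im_iteratedDeriv_eq_zero (hf x hx) hre k).self_of_nhds
  have htaylor := norm_sub_taylor_le_of_segment (n := 2) (fun ζ hζ => hf ζ (hseg hζ)) hM
  set P := ∑ k ∈ Finset.range 3, iteratedDeriv k f x * (Δx * I) ^ k / (k ! : ℂ)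
  have hP : P.im = Δx * (deriv f x).re := by
    simp [P, Finset.sum_range_succ, hre.self_of_nhds, hreal_deriv 2, sq, mul_comm]
  have hderiv : deriv f x = ((deriv f x).re : ℂ) := by
    simpa [Complex.ext_iff] using hreal_deriv 1
  have herr : (f (x + Δx * I)).im / Δx - (deriv f x).re = (f (x + Δx * I) - P).im / Δx := by
    rw [sub_im, hP]
    field_simp
  rw [hderiv, ← ofReal_sub, norm_real, Real.norm_eq_abs, herr, abs_div, abs_of_pos hΔx,
    div_le_iff₀ hΔx]
  calc |(f (x + Δx * I) - P).im| ≤ ‖f (x + Δx * I) - P‖ := abs_im_le_norm _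
    _ ≤ M * ‖(Δx : ℂ) * I‖ ^ (2 + 1) / (2 + 1)! := htaylor
    _ = M / 6 * Δx ^ 2 * Δx := by
      rw [norm_mul, norm_real, norm_I, Real.norm_of_nonneg hΔx.le, mul_one,
        show ((2 + 1)! : ℝ) = 6 by norm_num [factorial]]
      ring

/-- Complex-step derivative error bound: if `f` is analytic on an open ball around the real
point `x`, maps reals in that ball to reals, and its third derivative is bounded by `M` on the
segment from `x` to `x + i·Δx` (which lies in the ball), then the complex-step formula
`Im(f(x + i·Δx))/Δx` approximates `f'(x)` with error at most `(M/6)·Δx²`. -/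
theorem complex_step_derivative_error (f : ℂ → ℂ) (x Δx M r : ℝ) (hr : 0 < r) (hΔx : 0 < Δx)
    (hf : AnalyticOnNhd ℂ f (Metric.ball (x : ℂ) r))
    (hreal : ∀ t : ℝ, (t : ℂ) ∈ Metric.ball (x : ℂ) r → (f t).im = 0)
    (hseg : segment ℝ (x : ℂ) ((x : ℂ) + Δx * Complex.I) ⊆ Metric.ball (x : ℂ) r)
    (hM : ∀ z ∈ segment ℝ (x : ℂ) ((x : ℂ) + Δx * Complex.I), ‖iteratedDeriv 3 f z‖ ≤ M) :
    ‖(((f ((x : ℂ) + Δx * Complex.I)).im / Δx : ℝ) : ℂ) - deriv f (x : ℂ)‖ ≤ M / 6 * Δx ^ 2 :=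
  complex_step_derivative_error_general f x Δx M r hΔx hf hreal hseg hM
end
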